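/- arXiv:0709.3466 — 10 statements merged into one kernel-verified Lean document; each statement's English description precedes it below -/
import Mathlib

section
/- Let (G, B₊, B₋, N, S) be a saturated twin BN-pair and let θ be a BN-flip of G, i.e. an automorphism of G with θ ∘ θ = id, θ(B₊) = B₋, θ(N) = N and θ(n)·T = n·T for all n ∈ N. Then θ induces a Phan involution of the associated twin building; concretely: (a) for ε ∈ {+,−} and all g, h ∈ G and n ∈ N, if g⁻¹h ∈ B_ε·n·B_ε then θ(g)⁻¹θ(h) ∈ B_{−ε}·n·B_{−ε} (θ flips the distances); and (b) for ε ∈ {+,−} and all g, h ∈ G and n ∈ N, if g⁻¹h ∈ B_ε·n·B_{−ε} then θ(g)⁻¹θ(h) ∈ B_{−ε}·n·B_ε (θ preserves the codistance). -/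
open scoped Pointwise

/-- The double coset `B₁ · n · B₂` as a subset of `G`. -/
def doubleCoset {G : Type*} [Group G] (B₁ : Subgroup G) (n : G) (B₂ : Subgroup G) : Set G :=
  (B₁ : Set G) * {n} * (B₂ : Set G)

/-- The length of the class `nT` in `W = N/T` with respect to the generating
set `S` (encoded as a `T`-coset-closed subset of `N`): the least `k` such that
`n` lies in `s₁ ⋯ s_k · T` with all `sᵢ ∈ S`. -/
noncomputable def wordLen {G : Type*} [Group G] (S : Set G) (T : Subgroup G) (n : G) : ℕ :=
  sInf {k | ∃ l : List G, l.length = k ∧ (∀ s ∈ l, s ∈ S) ∧ n⁻¹ * l.prod ∈ T}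

/-- A saturated twin BN-pair `(G, B₊, B₋, N, S)`.  The subset `S ⊆ W = N/T` is
encoded as a `T`-coset-closed subset of `N`, so that `nT ∈ S` iff `n ∈ S`. -/
structure SaturatedTwinBNPair (G : Type*) [Group G] where
  /-- the positive Borel subgroup -/
  Bp : Subgroup G
  /-- the negative Borel subgroup -/
  Bm : Subgroup G
  /-- the subgroup `N` -/
  N : Subgroup G
  /-- the torus `T = B₊ ∩ N = B₋ ∩ N` -/
  T : Subgroup G
  /-- the set of simple reflections, encoded as a coset-closed subset of `N` -/
  S : Set G
  T_eq_p : T = Bp ⊓ N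
  T_eq_m : T = Bm ⊓ N
  T_normal : ∀ n ∈ N, ∀ t ∈ T, n * t * n⁻¹ ∈ T
  S_sub : S ⊆ (N : Set G)
  S_coset : ∀ s ∈ S, ∀ t ∈ T, s * t ∈ S
  /-- (BN1): `G = ⟨B₊ ∪ N⟩` -/
  gen_p : Subgroup.closure ((Bp : Set G) ∪ (N : Set G)) = ⊤
  /-- (BN1): `G = ⟨B₋ ∪ N⟩` -/
  gen_m : Subgroup.closure ((Bm : Set G) ∪ (N : Set G)) = ⊤
  /-- (BN2): the elements of `S` have order `2` in `W = N/T` … -/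
  S_order_two : ∀ s ∈ S, s ∉ T ∧ s * s ∈ T
  /-- (BN2): … and generate `W` -/
  S_gen : (N : Set G) ⊆ (Subgroup.closure (S ∪ (T : Set G)) : Set G)
  /-- (BN3) for `B₊`: `B·n·B·m·B ⊆ B·nm·B ∪ B·n·B` for `n ∈ N`, `mT ∈ S` -/
  bn3_p : ∀ n ∈ N, ∀ m ∈ S,
    doubleCoset Bp n Bp * {m} * (Bp : Set G) ⊆
      doubleCoset Bp (n * m) Bp ∪ doubleCoset Bp n Bp
  /-- (BN3) for `B₋` -/
  bn3_m : ∀ n ∈ N, ∀ m ∈ S,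
    doubleCoset Bm n Bm * {m} * (Bm : Set G) ⊆
      doubleCoset Bm (n * m) Bm ∪ doubleCoset Bm n Bm
  /-- (BN4) for `B₊`: `s·B·s⁻¹ ⊄ B` for `s ∈ S` -/
  bn4_p : ∀ m ∈ S, ∃ b ∈ Bp, m * b * m⁻¹ ∉ Bp
  /-- (BN4) for `B₋` -/
  bn4_m : ∀ m ∈ S, ∃ b ∈ Bm, m * b * m⁻¹ ∉ Bm
  /-- (TBN1) for `ε = +`: `B₊·n·B₋·m·B₋ = B₊·nm·B₋` whenever `l(nT·mT) < l(nT)` -/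
  tbn1_p : ∀ n ∈ N, ∀ m ∈ S, wordLen S T (n * m) < wordLen S T n →
    doubleCoset Bp n Bm * {m} * (Bm : Set G) = doubleCoset Bp (n * m) Bm
  /-- (TBN1) for `ε = −` -/
  tbn1_m : ∀ n ∈ N, ∀ m ∈ S, wordLen S T (n * m) < wordLen S T n →
    doubleCoset Bm n Bp * {m} * (Bp : Set G) = doubleCoset Bm (n * m) Bp
  /-- (TBN2): `B₊·s ∩ B₋ = ∅` for `s ∈ S` -/
  tbn2 : ∀ m ∈ S, ∀ b ∈ Bp, b * m ∉ Bm
  /-- saturation: `B₊ ∩ B₋ = T` -/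
  saturated : Bp ⊓ Bm = T

lemma doubleCoset_flip_aux {G : Type*} [Group G] (θ : G ≃* G)
    (B₁ B₂ B₁' B₂' : Subgroup G)
    (h1 : ∀ b ∈ B₁, θ b ∈ B₁') (h2 : ∀ b ∈ B₂, θ b ∈ B₂')
    (n : G) (ht : n⁻¹ * θ n ∈ B₂') (x : G)
    (hx : x ∈ doubleCoset B₁ n B₂) : θ x ∈ doubleCoset B₁' n B₂' := by
  obtain ⟨u, hu, b₂, hb₂, rfl⟩ := hx
  obtain ⟨b₁, hb₁, m, hm, rfl⟩ := hu
  simp only [Set.mem_singleton_iff] at hm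
  refine ⟨θ b₁ * n, ⟨θ b₁, h1 b₁ hb₁, n, rfl, rfl⟩, (n⁻¹ * θ n) * θ b₂,
    B₂'.mul_mem ht (h2 b₂ hb₂), ?_⟩
  simp only [map_mul, hm]
  group

/-- A BN-flip `θ` of a group `G` with a saturated twin
BN-pair (an involutory automorphism with `θ(B₊) = B₋`, `θ(N) = N`, and
`θ(n)T = nT` for all `n ∈ N`) induces a Phan involution of the associated twin
building: it flips the distances and preserves the codistance. -/
theorem BN_flip_induces_Phan_involution {G : Type*} [Group G]
    (P : SaturatedTwinBNPair G)
    (θ : G ≃* G)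
    (hinv : ∀ g : G, θ (θ g) = g)
    (hB : Subgroup.map θ.toMonoidHom P.Bp = P.Bm)
    (hN : Subgroup.map θ.toMonoidHom P.N = P.N)
    (hW : ∀ n ∈ P.N, n⁻¹ * θ n ∈ P.T) :
    -- (a) `θ` flips the distances
    ((∀ g h : G, ∀ n ∈ P.N, g⁻¹ * h ∈ doubleCoset P.Bp n P.Bp →
        (θ g)⁻¹ * θ h ∈ doubleCoset P.Bm n P.Bm) ∧
     (∀ g h : G, ∀ n ∈ P.N, g⁻¹ * h ∈ doubleCoset P.Bm n P.Bm →
        (θ g)⁻¹ * θ h ∈ doubleCoset P.Bp n P.Bp)) ∧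
    -- (b) `θ` preserves the codistance
    ((∀ g h : G, ∀ n ∈ P.N, g⁻¹ * h ∈ doubleCoset P.Bp n P.Bm →
        (θ g)⁻¹ * θ h ∈ doubleCoset P.Bm n P.Bp) ∧
     (∀ g h : G, ∀ n ∈ P.N, g⁻¹ * h ∈ doubleCoset P.Bm n P.Bp →
        (θ g)⁻¹ * θ h ∈ doubleCoset P.Bp n P.Bm)) := by
  have hpm : ∀ b ∈ P.Bp, θ b ∈ P.Bm := fun b hb => by
    rw [← hB]; exact ⟨b, hb, rfl⟩
  have hmp : ∀ b ∈ P.Bm, θ b ∈ P.Bp := fun b hb => by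
    rw [← hB] at hb
    obtain ⟨a, ha, rfl⟩ := hb
    simpa [hinv] using ha
  have hTp : ∀ x ∈ P.T, x ∈ P.Bp := fun x hx => by
    rw [← P.saturated] at hx; exact hx.1
  have hTm : ∀ x ∈ P.T, x ∈ P.Bm := fun x hx => by
    rw [← P.saturated] at hx; exact hx.2
  refine ⟨⟨?_, ?_⟩, ?_, ?_⟩ <;>
    intro g h n hn hx <;>
    [ (have := doubleCoset_flip_aux θ P.Bp P.Bp P.Bm P.Bm hpm hpm n (hTm _ (hW n hn)) _ hx);
      (have := doubleCoset_flip_aux θ P.Bm P.Bm P.Bp P.Bp hmp hmp n (hTp _ (hW n hn)) _ hx);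
      (have := doubleCoset_flip_aux θ P.Bp P.Bm P.Bm P.Bp hpm hmp n (hTp _ (hW n hn)) _ hx);
      (have := doubleCoset_flip_aux θ P.Bm P.Bp P.Bp P.Bm hmp hpm n (hTm _ (hW n hn)) _ hx)] <;>
    simpa [map_mul, map_inv] using this
end

section
/- Let X be a set endowed with a family of equivalence relations (∼_i)_{i ∈ I} such that the transitive hull of the union of the relations ∼_i is all of X × X. Let G be a group acting on X by permutations preserving each equivalence relation ∼_i (i.e. x ∼_i y implies g·x ∼_i g·y for all g ∈ G). If there exists a point p ∈ X such that for each i ∈ I the setwise stabilizer in G of the equivalence class [p]_i acts transitively on [p]_i, then G acts transitively on X. -/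
open scoped Pointwise

/-- Let `X` be a set with a family of equivalence relations
`(∼ᵢ)_{i ∈ I}` whose union has transitive hull all of `X × X`, and let a group
`G` act on `X` preserving each `∼ᵢ`.  If there is a point `p ∈ X` such that for
each `i` the setwise stabilizer of the class `[p]ᵢ` acts transitively on
`[p]ᵢ`, then `G` acts transitively on `X`. -/
theorem transitive_of_local_transitive {X I G : Type*} [Group G] [MulAction G X]
    (r : I → X → X → Prop)
    (hequiv : ∀ i, Equivalence (r i))
    (hhull : ∀ x y : X, Relation.TransGen (fun a b => ∃ i, r i a b) x y)
    (hpres : ∀ (i : I) (g : G) (x y : X), r i x y → r i (g • x) (g • y))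
    (p : X)
    (hloc : ∀ i : I, ∀ x y : X, r i p x → r i p y →
      ∃ g : G, (g • {z : X | r i p z} = {z : X | r i p z}) ∧ g • x = y) :
    ∀ x y : X, ∃ g : G, g • x = y := by
  have step : ∀ x y : X, (∃ i, r i x y) → (∃ g : G, g • p = x) → ∃ g : G, g • p = y := by
    rintro x y ⟨i, hxy⟩ ⟨g, rfl⟩
    have h1 : r i p (g⁻¹ • y) := by
      have := hpres i g⁻¹ _ _ hxy
      simpa using this
    obtain ⟨h, -, hh⟩ := hloc i (g⁻¹ • y) (g⁻¹ • y) h1 h1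
    obtain ⟨h', -, hh'⟩ := hloc i p (g⁻¹ • y) ((hequiv i).refl p) h1
    exact ⟨g * h', by simp [mul_smul, hh']⟩
  have orbit : ∀ x : X, ∃ g : G, g • p = x := by
    intro x
    have := hhull p x
    induction this with
    | single h => exact step _ _ h ⟨1, one_smul _ _⟩
    | tail _ h ih => exact step _ _ h ih
  intro x y
  obtain ⟨a, rfl⟩ := orbit x
  obtain ⟨b, rfl⟩ := orbit y
  exact ⟨b * a⁻¹, by simp [mul_smul]⟩
end

section
/- Let F be a field, let φ be an automorphism of the additive group (F, +), and suppose there exists an automorphism θ of SL₂(F) with θ ∘ θ = id such that θ maps the upper unipotent matrix !![1, x; 0, 1] to the lower unipotent matrix !![1, 0; φ(x), 1] and maps !![1, 0; y, 1] to !![1, φ⁻¹(y); 0, 1], for all x, y ∈ F. Then there exist a ring automorphism σ of F with σ ∘ σ = id and an element ε ∈ F with ε ≠ 0 and σ(ε) = ε, such that φ(x) = ε·σ(x) for all x ∈ F. -/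
/-!
Applying `θ` to the braid relation `u(t) l(-t⁻¹) u(t) = l(-t⁻¹) u(t) l(-t⁻¹)` in `SL₂(F)`, where
`u`, `l` are the upper and lower unipotent matrices, gives `φ⁻¹(t⁻¹) = φ(t)⁻¹`. Applying `φ⁻¹` to
`(1 + x)⁻¹ + (1 + x⁻¹)⁻¹ = 1` then yields `φ(x) φ(x⁻¹) = φ(1)²`, so `σ := φ(1)⁻¹ φ` is additive,
fixes `1` and commutes with inversion; by Hua's identity such a map is multiplicative. Finally
`φ⁻¹ = φ(1)⁻¹ σ`, and `φ ∘ φ⁻¹ = id` forces `σ(φ 1) = φ 1` and `σ ∘ σ = id`.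
-/

open Matrix

section

variable {F : Type*} [Field F]

def upperUnipotent (x : F) : SpecialLinearGroup (Fin 2) F :=
  ⟨!![1, x; 0, 1], by simp [det_fin_two_of]⟩

def lowerUnipotent (y : F) : SpecialLinearGroup (Fin 2) F :=
  ⟨!![1, 0; y, 1], by simp [det_fin_two_of]⟩

@[simp]
theorem coe_upperUnipotent (x : F) :
    (upperUnipotent x : Matrix (Fin 2) (Fin 2) F) = !![1, x; 0, 1] := rfl

@[simp]
theorem coe_lowerUnipotent (y : F) :
    (lowerUnipotent y : Matrix (Fin 2) (Fin 2) F) = !![1, 0; y, 1] := rfl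

theorem upperUnipotent_braid {t : F} (ht : t ≠ 0) :
    upperUnipotent t * lowerUnipotent (-t⁻¹) * upperUnipotent t =
      lowerUnipotent (-t⁻¹) * upperUnipotent t * lowerUnipotent (-t⁻¹) := by
  ext i j
  fin_cases i <;> fin_cases j <;> simp [ht]

theorem mul_eq_neg_one_of_lowerUnipotent_braid {a b : F} (hb : b ≠ 0)
    (h : lowerUnipotent a * upperUnipotent b * lowerUnipotent a =
      upperUnipotent b * lowerUnipotent a * upperUnipotent b) :
    a * b = -1 := by
  have h01 := congrArg (fun g : SpecialLinearGroup (Fin 2) F => g 0 1) h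
  simp at h01
  linear_combination h01.resolve_right hb

theorem symm_inv_eq_inv_of_swaps_unipotents (φ : F ≃+ F)
    (θ : SpecialLinearGroup (Fin 2) F →* SpecialLinearGroup (Fin 2) F)
    (hup : ∀ x, θ (upperUnipotent x) = lowerUnipotent (φ x))
    (hlow : ∀ y, θ (lowerUnipotent y) = upperUnipotent (φ.symm y)) (t : F) :
    φ.symm t⁻¹ = (φ t)⁻¹ := by
  rcases eq_or_ne t 0 with rfl | ht
  · simp
  have hbraid := congrArg θ (upperUnipotent_braid ht)
  simp only [map_mul, hup, hlow] at hbraid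
  have h := mul_eq_neg_one_of_lowerUnipotent_braid (by simpa using ht) hbraid
  rw [map_neg] at h
  exact eq_inv_of_mul_eq_one_left (by linear_combination -h)

theorem hua_identity {a b : F} (ha : a ≠ 0) (hb : b ≠ 0) (hab : a * b ≠ 1) :
    a - (a⁻¹ + (b⁻¹ - a)⁻¹)⁻¹ = a * b * a := by
  have h1 : 1 - a * b ≠ 0 := sub_ne_zero.mpr (Ne.symm hab)
  have h2 : b⁻¹ - a = (1 - a * b) / b := by field_simp
  rw [h2, inv_div]
  have h3 : a⁻¹ + b / (1 - a * b) = (a * (1 - a * b))⁻¹ := by field_simp; ring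
  rw [h3, inv_inv]
  ring

section Hua

variable {K : Type*} [Field K] (f : F →+ K)

theorem AddMonoidHom.map_mul_mul_self_of_map_inv (hf : Function.Injective f)
    (hinv : ∀ x, f x⁻¹ = (f x)⁻¹) (a b : F) : f (a * b * a) = f a * f b * f a := by
  rcases eq_or_ne a 0 with rfl | ha
  · simp
  rcases eq_or_ne b 0 with rfl | hb
  · simp
  have hfa : f a ≠ 0 := (map_ne_zero_iff f hf).mpr ha
  rcases eq_or_ne (a * b) 1 with hab | hab
  · rw [hab, one_mul, eq_inv_of_mul_eq_one_right hab, hinv, mul_inv_cancel₀ hfa, one_mul]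
  have hfab : f a * f b ≠ 1 := by
    intro h
    have hba : b = a⁻¹ := hf (by rw [hinv]; exact eq_inv_of_mul_eq_one_right h)
    exact hab (by rw [hba, mul_inv_cancel₀ ha])
  rw [← hua_identity ha hb hab, map_sub, hinv, map_add, hinv, hinv, map_sub, hinv,
    hua_identity hfa ((map_ne_zero_iff f hf).mpr hb) hfab]

theorem AddMonoidHom.map_mul_of_map_inv (hf : Function.Injective f) (h1 : f 1 = 1)
    (hinv : ∀ x, f x⁻¹ = (f x)⁻¹) (a b : F) : f (a * b) = f a * f b := by
  have hJ := f.map_mul_mul_self_of_map_inv hf hinv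
  have hdouble : f (a * b) + f (a * b) = f a * f b + f a * f b := by
    have h := hJ (a + 1) b
    rw [show (a + 1) * b * (a + 1) = a * b * a + (a * b + a * b) + b by ring,
      map_add, map_add, map_add, hJ, map_add, h1] at h
    linear_combination h
  have hsquare : f (a * b) * f (a * b) = (f a * f b) * (f a * f b) := by
    have h := hJ (a * b) 1
    rw [show a * b * 1 * (a * b) = a * (b * 1 * b) * a by ring, hJ, hJ, h1] at h
    linear_combination -h
  -- polarization alone only gives `2 f(ab) = 2 f(a) f(b)`, useless in characteristic 2
  have hdiff : (f (a * b) - f a * f b) * (f (a * b) - f a * f b) = 0 := by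
    linear_combination hsquare - (f a * f b) * hdouble
  exact sub_eq_zero.mp (mul_self_eq_zero.mp hdiff)

end Hua

section AdditiveEquiv

variable (φ : F ≃+ F)

theorem AddEquiv.apply_inv_of_symm_inv (hφ : ∀ t, φ.symm t⁻¹ = (φ t)⁻¹) (x : F) :
    φ x⁻¹ = φ 1 ^ 2 / φ x := by
  rcases eq_or_ne x 0 with rfl | hx
  · simp
  rcases eq_or_ne x (-1) with rfl | hx1
  · simp [sq, div_neg]
  have hne : ∀ {y : F}, y ≠ 0 → φ y ≠ 0 := EmbeddingLike.map_ne_zero_iff.mpr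
  have h1x : 1 + x ≠ 0 := fun h ↦ hx1 (by linear_combination h)
  have h1x' : 1 + x⁻¹ = (1 + x) * x⁻¹ := by field_simp; ring
  have key : (1 + x)⁻¹ + (1 + x⁻¹)⁻¹ = 1 := by
    rw [h1x', mul_inv, inv_inv]
    field_simp
  have h := congrArg φ.symm key
  rw [map_add, hφ, hφ, ← inv_one, hφ, inv_one, map_add, map_add] at h
  have hε : φ 1 ≠ 0 := hne one_ne_zero
  have hφx : φ x ≠ 0 := hne hx
  have hεx : φ 1 + φ x ≠ 0 := by
    rw [← map_add]; exact hne h1x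
  have hεx' : φ 1 + φ x⁻¹ ≠ 0 := by
    rw [← map_add, h1x']; exact hne (by simp [h1x, hx])
  generalize φ x⁻¹ = c at h hεx' ⊢
  field_simp at h ⊢
  linear_combination -h

theorem AddEquiv.exists_ringEquiv_of_symm_inv (hφ : ∀ t, φ.symm t⁻¹ = (φ t)⁻¹) :
    ∃ σ : F ≃+* F, (∀ x, σ (σ x) = x) ∧
      ∃ ε : F, ε ≠ 0 ∧ σ ε = ε ∧ ∀ x, φ x = ε * σ x := by
  set ε := φ 1
  have hε : ε ≠ 0 := EmbeddingLike.map_ne_zero_iff.mpr one_ne_zero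
  let f : F →+ F := (AddMonoidHom.mulLeft ε⁻¹).comp φ
  have hf : Function.Injective f := (mul_right_injective₀ (inv_ne_zero hε)).comp φ.injective
  have hf1 : f 1 = 1 := inv_mul_cancel₀ hε
  have hf_inv : ∀ x, f x⁻¹ = (f x)⁻¹ := by
    intro x
    change ε⁻¹ * φ x⁻¹ = (ε⁻¹ * φ x)⁻¹
    rw [φ.apply_inv_of_symm_inv hφ, mul_inv, inv_inv, sq, mul_div_assoc, inv_mul_cancel_left₀ hε,
      div_eq_mul_inv]
  let σ : F →+* F := { f with map_one' := hf1, map_mul' := f.map_mul_of_map_inv hf hf1 hf_inv }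
  have hφσ : ∀ x, φ x = ε * σ x := fun x ↦ (mul_inv_cancel_left₀ hε (φ x)).symm
  have hψσ : ∀ x, φ.symm x = ε⁻¹ * σ x := by
    intro x
    simpa [hφσ, map_inv₀, mul_comm] using hφ x⁻¹
  have happly_symm : ∀ x, x = ε * (σ ε)⁻¹ * σ (σ x) := by
    intro x
    conv_lhs => rw [← φ.apply_symm_apply x, hψσ, hφσ, map_mul, map_inv₀]
    ring
  have hσε : σ ε = ε := by
    have h := happly_symm 1
    rw [map_one, map_one, mul_one] at h
    exact (eq_of_mul_inv_eq_one h.symm).symm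
  have hσσ : ∀ x, σ (σ x) = x := by
    intro x
    have h := happly_symm x
    rwa [hσε, mul_inv_cancel₀ hε, one_mul, eq_comm] at h
  exact ⟨RingEquiv.ofRingHom σ σ (RingHom.ext hσσ) (RingHom.ext hσσ), hσσ, ε, hε, hσε, hφσ⟩

end AdditiveEquiv

end

theorem flip_of_SL2_comes_from_field_aut_general {F : Type*} [Field F]
    (φ : F ≃+ F)
    (θ : SpecialLinearGroup (Fin 2) F ≃* SpecialLinearGroup (Fin 2) F)
    (hup : ∀ (x : F) (u : SpecialLinearGroup (Fin 2) F),
      (u : Matrix (Fin 2) (Fin 2) F) = !![1, x; 0, 1] →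
      (θ u : Matrix (Fin 2) (Fin 2) F) = !![1, 0; φ x, 1])
    (hlow : ∀ (y : F) (u : SpecialLinearGroup (Fin 2) F),
      (u : Matrix (Fin 2) (Fin 2) F) = !![1, 0; y, 1] →
      (θ u : Matrix (Fin 2) (Fin 2) F) = !![1, φ.symm y; 0, 1]) :
    ∃ σ : F ≃+* F, (∀ x, σ (σ x) = x) ∧
      ∃ ε : F, ε ≠ 0 ∧ σ ε = ε ∧ ∀ x, φ x = ε * σ x := by
  refine φ.exists_ringEquiv_of_symm_inv
    (symm_inv_eq_inv_of_swaps_unipotents φ θ.toMonoidHom (fun x ↦ ?_) (fun y ↦ ?_))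
  · exact Subtype.ext (hup x _ (coe_upperUnipotent x))
  · exact Subtype.ext (hlow y _ (coe_lowerUnipotent y))

/-- If an additive automorphism `φ` of a field `F` induces an
involutory automorphism `θ` of `SL₂(F)` interchanging the upper and lower
unipotent subgroups as indicated, then `φ(x) = ε·σ(x)` for some field
automorphism `σ` of order dividing `2` and some `ε ∈ Fix_F(σ) \ {0}`. -/
theorem flip_of_SL2_comes_from_field_aut {F : Type*} [Field F]
    (φ : F ≃+ F)
    (θ : SpecialLinearGroup (Fin 2) F ≃* SpecialLinearGroup (Fin 2) F)
    (hinv : ∀ g, θ (θ g) = g)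
    (hup : ∀ (x : F) (u : SpecialLinearGroup (Fin 2) F),
      (u : Matrix (Fin 2) (Fin 2) F) = !![1, x; 0, 1] →
      (θ u : Matrix (Fin 2) (Fin 2) F) = !![1, 0; φ x, 1])
    (hlow : ∀ (y : F) (u : SpecialLinearGroup (Fin 2) F),
      (u : Matrix (Fin 2) (Fin 2) F) = !![1, 0; y, 1] →
      (θ u : Matrix (Fin 2) (Fin 2) F) = !![1, φ.symm y; 0, 1]) :
    ∃ σ : F ≃+* F, (∀ x, σ (σ x) = x) ∧
      ∃ ε : F, ε ≠ 0 ∧ σ ε = ε ∧ ∀ x, φ x = ε * σ x :=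
  flip_of_SL2_comes_from_field_aut_general φ θ hup hlow
end

section
/- Let F be a field, σ a ring automorphism of F with σ ∘ σ = id, and δ ∈ F with δ ≠ 0 and σ(δ) = δ. Then the centralizer of θ_{δ,σ} in SL₂(F) is K_{δ,σ} = {g ∈ SL₂(F) : θ_{δ,σ}(g) = g} = { !![σ(u), δ·σ(v); -v, u] : u, v ∈ F, u·σ(u) + δ·v·σ(v) = 1 }. -/
open Matrix

/-- The centralizer of the flip `θ_{δ,σ} : X ↦ A ⬝ X^σ ⬝ A⁻¹`,
`A = !![0,1;-δ⁻¹,0]`, in `SL₂(F)` consists exactly of the matrices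
`!![σ(u), δ·σ(v); -v, u]` with `u·σ(u) + δ·v·σ(v) = 1`. -/
theorem centralizer_of_flip {F : Type*} [Field F]
    (σ : F ≃+* F) (hσ : ∀ x, σ (σ x) = x)
    (δ : F) (hδ : δ ≠ 0) (hfix : σ δ = δ) :
    {g : SpecialLinearGroup (Fin 2) F |
        !![0, 1; -δ⁻¹, 0] * (g : Matrix (Fin 2) (Fin 2) F).map σ * (!![0, 1; -δ⁻¹, 0])⁻¹ =
          (g : Matrix (Fin 2) (Fin 2) F)} =
      {g : SpecialLinearGroup (Fin 2) F | ∃ u v : F,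
        (g : Matrix (Fin 2) (Fin 2) F) = !![σ u, δ * σ v; -v, u] ∧
          u * σ u + δ * v * σ v = 1} := by
  have hinv : (!![(0:F), 1; -δ⁻¹, 0])⁻¹ = !![0, -δ; 1, 0] := by
    apply inv_eq_right_inv
    rw [Matrix.mul_fin_two]
    ext i j
    fin_cases i <;> fin_cases j <;> simp [hδ]
  ext g
  simp only [Set.mem_setOf_eq, hinv]
  set M := (g : Matrix (Fin 2) (Fin 2) F) with hM
  have hdet : M 0 0 * M 1 1 - M 0 1 * M 1 0 = 1 := by
    have := g.2
    rw [Matrix.det_fin_two] at this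
    exact this
  have heta : M = !![M 0 0, M 0 1; M 1 0, M 1 1] := Matrix.eta_fin_two M
  have hmap : M.map σ = !![σ (M 0 0), σ (M 0 1); σ (M 1 0), σ (M 1 1)] := by
    rw [heta]; ext i j; fin_cases i <;> fin_cases j <;> simp
  constructor
  · intro h
    rw [hmap, Matrix.mul_fin_two, Matrix.mul_fin_two, ← Matrix.ext_iff] at h
    simp only [Fin.forall_fin_two] at h
    obtain ⟨⟨h00, h01⟩, h10, h11⟩ := h
    simp at h00 h01 h10 h11
    refine ⟨M 1 1, -(M 1 0), ?_, ?_⟩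
    · ext i j
      fin_cases i <;> fin_cases j <;> simp [← h00, ← h01, map_neg] <;> ring
    · rw [map_neg]
      rw [← h00, ← h01] at hdet
      linear_combination hdet
  · rintro ⟨u, v, hg, hd⟩
    have hmap2 : (!![σ u, δ * σ v; -v, u]).map σ = !![u, δ * v; -(σ v), σ u] := by
      ext i j
      fin_cases i <;> fin_cases j <;> simp [hσ, hfix, map_neg, _root_.map_mul]
    rw [hg, hmap2, Matrix.mul_fin_two, Matrix.mul_fin_two]
    ext i j
    fin_cases i <;> fin_cases j <;> (try simp) <;> (try field_simp) <;> (try ring)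
end

section
/- Let F be a field, σ a ring automorphism of F with σ ∘ σ = id, and δ ∈ F with δ ≠ 0 and σ(δ) = δ. Then the projective centralizer of θ_{δ,σ} in SL₂(F), that is PK_{δ,σ} = {g ∈ SL₂(F) : θ_{δ,σ}(g) = g or θ_{δ,σ}(g) = -g}, equals { !![ε·σ(u), δ·ε·σ(v); -v, u] : u, v ∈ F, ε ∈ {1, -1}, u·σ(u) + δ·v·σ(v) = ε }. -/
open Matrix

private lemma flip_map_two {F : Type*} [Field F] (σ : F ≃+* F) (a b c d : F) :
    (!![a, b; c, d]).map σ = !![σ a, σ b; σ c, σ d] := by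
  ext i j; fin_cases i <;> fin_cases j <;> simp

private lemma flip_A_inv {F : Type*} [Field F] (δ : F) (hδ : δ ≠ 0) :
    (!![(0 : F), 1; -δ⁻¹, 0])⁻¹ = !![0, -δ; 1, 0] := by
  apply inv_eq_right_inv
  rw [Matrix.mul_fin_two]
  ext i j
  fin_cases i <;> fin_cases j <;>
    simp [Matrix.one_apply] <;> field_simp

/-- The projective centralizer of the flip
`θ_{δ,σ} : X ↦ A ⬝ X^σ ⬝ A⁻¹`, `A = !![0,1;-δ⁻¹,0]`, in `SL₂(F)` consists
exactly of the matrices `!![ε·σ(u), δ·ε·σ(v); -v, u]` with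
`u·σ(u) + δ·v·σ(v) = ε`, `ε = ±1`. -/
theorem projective_centralizer_of_flip {F : Type*} [Field F]
    (σ : F ≃+* F) (hσ : ∀ x, σ (σ x) = x)
    (δ : F) (hδ : δ ≠ 0) (hfix : σ δ = δ) :
    {g : SpecialLinearGroup (Fin 2) F |
        !![0, 1; -δ⁻¹, 0] * (g : Matrix (Fin 2) (Fin 2) F).map σ * (!![0, 1; -δ⁻¹, 0])⁻¹ =
          (g : Matrix (Fin 2) (Fin 2) F) ∨
      !![0, 1; -δ⁻¹, 0] * (g : Matrix (Fin 2) (Fin 2) F).map σ * (!![0, 1; -δ⁻¹, 0])⁻¹ =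
          -(g : Matrix (Fin 2) (Fin 2) F)} =
      {g : SpecialLinearGroup (Fin 2) F | ∃ u v ε : F, (ε = 1 ∨ ε = -1) ∧
        (g : Matrix (Fin 2) (Fin 2) F) = !![ε * σ u, δ * ε * σ v; -v, u] ∧
          u * σ u + δ * v * σ v = ε} := by
  ext g
  simp only [Set.mem_setOf_eq, flip_A_inv δ hδ]
  set M : Matrix (Fin 2) (Fin 2) F := (g : Matrix (Fin 2) (Fin 2) F) with hMdef
  have hdet : M 0 0 * M 1 1 - M 0 1 * M 1 0 = 1 := by
    have := g.2
    rw [Matrix.det_fin_two] at this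
    exact this
  have hM : M = !![M 0 0, M 0 1; M 1 0, M 1 1] := Matrix.eta_fin_two M
  have hθ : !![(0 : F), 1; -δ⁻¹, 0] * M.map σ * !![0, -δ; 1, 0] =
      !![σ (M 1 1), -δ * σ (M 1 0); -δ⁻¹ * σ (M 0 1), σ (M 0 0)] := by
    rw [hM, flip_map_two, Matrix.mul_fin_two, Matrix.mul_fin_two]
    ext i j
    fin_cases i <;> fin_cases j <;> (try simp) <;> (try field_simp) <;> (try ring)
  rw [hθ]
  constructor
  · rintro (h | h)
    · have h00 : σ (M 1 1) = M 0 0 := by simpa using congrFun (congrFun h 0) 0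
      have h01 : -δ * σ (M 1 0) = M 0 1 := by simpa using congrFun (congrFun h 0) 1
      refine ⟨M 1 1, -(M 1 0), 1, Or.inl rfl, ?_, ?_⟩
      · ext i j
        fin_cases i <;> fin_cases j <;> simp [map_neg]
        · linear_combination -h00
        · linear_combination -h01
      · simp only [map_neg]
        linear_combination M 1 1 * h00 - M 1 0 * h01 + hdet
    · have h00 : σ (M 1 1) = -M 0 0 := by simpa using congrFun (congrFun h 0) 0
      have h01 : -δ * σ (M 1 0) = -M 0 1 := by simpa using congrFun (congrFun h 0) 1
      refine ⟨M 1 1, -(M 1 0), -1, Or.inr rfl, ?_, ?_⟩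
      · ext i j
        fin_cases i <;> fin_cases j <;> simp [map_neg]
        · linear_combination h00
        · linear_combination h01
      · simp only [map_neg]
        linear_combination M 1 1 * h00 - M 1 0 * h01 - hdet
  · rintro ⟨u, v, ε, (rfl | rfl), hMeq, huv⟩
    · left
      rw [hMeq]
      ext i j
      fin_cases i <;> fin_cases j <;>
        simp [hσ, hfix, _root_.map_mul, map_neg] <;> field_simp
    · right
      rw [hMeq]
      ext i j
      fin_cases i <;> fin_cases j <;>
        simp [hσ, hfix, _root_.map_mul, map_neg, Matrix.neg_apply] <;> field_simp
end

section
/- Let F be a field, σ a ring automorphism of F with σ ∘ σ = id, and δ ∈ F with δ ≠ 0 and σ(δ) = δ. If the projective centralizer PK_{δ,σ} acts transitively on the projective line ℙ¹(F), then: (a) the characteristic of F is not 2; (b) there exists x ∈ F, x ≠ 0, with δ = (x·σ(x))⁻¹; and (c) θ_{δ,σ} is conjugate to θ_{1,σ} by an inner automorphism of GL₂(F) given by an invertible diagonal matrix, i.e. there exists an invertible diagonal 2×2 matrix Y over F such that θ_{δ,σ}(Y·g·Y⁻¹) = Y·θ_{1,σ}(g)·Y⁻¹ for all g ∈ SL₂(F).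 -/
/-!
If `θ_{δ,σ}(g) = ε g` with `ε = ±1`, comparing entries turns `det g = 1` into
`N(g e₁) = ε` for the form `N(v) = v₀ σ(v₀) + δ v₁ σ(v₁)`; so transitivity of
`PK_{δ,σ}` means every line of `F²` contains a vector of norm `±1`. The line through `e₂`
gives `δ x σ(x) = ±1`; the line through `(1, x)` has norm `1 + δ x σ(x)` up to a norm
factor, which rules out `-1` and then shows `2 ≠ 0`. With `δ = y σ(y)`, `y = x⁻¹`, the
diagonal matrix `Y = diag(y, 1)` satisfies `A_δ Y^σ = y⁻¹ Y A_1`, which is the conjugacy.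
-/

open Matrix

section Flip

variable {F : Type*} [Field F] (σ : F ≃+* F)

def flipMatrix (δ : F) : Matrix (Fin 2) (Fin 2) F := !![0, 1; -δ⁻¹, 0]

noncomputable def flipMap (δ : F) (X : Matrix (Fin 2) (Fin 2) F) : Matrix (Fin 2) (Fin 2) F :=
  flipMatrix δ * X.map σ * (flipMatrix δ)⁻¹

def normForm (δ : F) (v : Fin 2 → F) : F := v 0 * σ (v 0) + δ * (v 1 * σ (v 1))

def LinesMeetNormOneOrNegOne (δ : F) : Prop :=
  ∀ w : Fin 2 → F, w ≠ 0 → ∃ c : F, normForm σ δ (c • w) = 1 ∨ normForm σ δ (c • w) = -1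

variable {σ}

lemma inv_flipMatrix {δ : F} (hδ : δ ≠ 0) : (flipMatrix δ)⁻¹ = !![0, -δ; 1, 0] := by
  refine inv_eq_right_inv ?_
  rw [flipMatrix, mul_fin_two, one_fin_two]
  simp [hδ]

lemma flipMap_fin_two {δ : F} (hδ : δ ≠ 0) (a b c d : F) :
    flipMap σ δ !![a, b; c, d] = !![σ d, -δ * σ c; -δ⁻¹ * σ b, σ a] := by
  rw [flipMap, inv_flipMatrix hδ, flipMatrix]
  ext i j
  fin_cases i <;> fin_cases j <;>
    simp [mul_apply, vecMul, dotProduct, Fin.sum_univ_two] <;> field_simp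

lemma normForm_smul (δ c : F) (v : Fin 2 → F) :
    normForm σ δ (c • v) = c * σ c * normForm σ δ v := by
  simp only [normForm, Pi.smul_apply, smul_eq_mul, map_mul]
  ring

lemma normForm_mulVec_eq_one_or_neg_one {δ : F} (hδ : δ ≠ 0) {M : Matrix (Fin 2) (Fin 2) F}
    (hdet : M.det = 1) (hM : flipMap σ δ M = M ∨ flipMap σ δ M = -M) :
    normForm σ δ (M *ᵥ ![1, 0]) = 1 ∨ normForm σ δ (M *ᵥ ![1, 0]) = -1 := by
  obtain ⟨a, b, c, d, rfl⟩ : ∃ a b c d, M = !![a, b; c, d] := ⟨_, _, _, _, eta_fin_two M⟩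
  rw [det_fin_two_of] at hdet
  have of_flipMap_eq_smul : ∀ ε : F, flipMap σ δ !![a, b; c, d] = ε • !![a, b; c, d] →
      normForm σ δ (!![a, b; c, d] *ᵥ ![1, 0]) = ε := by
    intro ε h
    rw [flipMap_fin_two hδ] at h
    have h01 : -δ * σ c = ε * b := congrFun (congrFun h 0) 1
    have h11 : σ a = ε * d := congrFun (congrFun h 1) 1
    simp [normForm, mulVec, dotProduct]
    linear_combination a * h11 - c * h01 + ε * hdet
  exact hM.imp (fun h => of_flipMap_eq_smul 1 (by rw [h, one_smul]))
    (fun h => of_flipMap_eq_smul (-1) (by rw [h, neg_one_smul]))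

lemma exists_mul_conj_eq_one {δ : F} (hN : LinesMeetNormOneOrNegOne σ δ) :
    ∃ x : F, δ * (x * σ x) = 1 := by
  have he₂ : normForm σ δ ![0, 1] = δ := by simp [normForm]
  obtain ⟨x, hx⟩ := hN ![0, 1] (by simp)
  rw [normForm_smul, he₂, mul_comm] at hx
  refine ⟨x, hx.resolve_right fun hneg => ?_⟩
  have h0 : normForm σ δ ![1, x] = 0 := by simp [normForm, hneg]
  obtain ⟨c, hc⟩ := hN ![1, x] (by simp)
  rw [normForm_smul, h0] at hc
  simp at hc

lemma two_ne_zero_of_mul_conj_eq_one {δ x : F} (hN : LinesMeetNormOneOrNegOne σ δ)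
    (hx : δ * (x * σ x) = 1) : (2 : F) ≠ 0 := by
  have h2 : normForm σ δ ![1, x] = 2 := by simp [normForm, hx, one_add_one_eq_two]
  obtain ⟨c, hc⟩ := hN ![1, x] (by simp)
  intro h
  rw [normForm_smul, h2, h] at hc
  simp at hc

lemma flipMap_conj_diagonal {y : F} (hy : y ≠ 0) (X : Matrix (Fin 2) (Fin 2) F) :
    flipMap σ (y * σ y) (!![y, 0; 0, 1] * X * (!![y, 0; 0, 1])⁻¹) =
      !![y, 0; 0, 1] * flipMap σ 1 X * (!![y, 0; 0, 1])⁻¹ := by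
  have hσy : σ y ≠ 0 := (map_ne_zero σ).mpr hy
  have hYinv : (!![y, 0; 0, 1] : Matrix (Fin 2) (Fin 2) F)⁻¹ = !![y⁻¹, 0; 0, 1] :=
    inv_eq_right_inv (by rw [mul_fin_two, one_fin_two]; simp [hy])
  rw [hYinv, eta_fin_two X]
  simp only [mul_fin_two, mul_zero, zero_mul, mul_one, one_mul, add_zero, zero_add]
  rw [flipMap_fin_two (mul_ne_zero hy hσy), flipMap_fin_two one_ne_zero]
  simp only [mul_fin_two]
  ext i j
  fin_cases i <;> fin_cases j <;> simp [map_inv₀] <;> field_simp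

end Flip

theorem transitive_flip_conjugate_to_standard_general {F : Type*} [Field F]
    (σ : F ≃+* F)
    (δ : F) (hδ : δ ≠ 0)
    (htrans : ∀ v w : Fin 2 → F, v ≠ 0 → w ≠ 0 →
      ∃ g : SpecialLinearGroup (Fin 2) F,
        (!![0, 1; -δ⁻¹, 0] * (g : Matrix (Fin 2) (Fin 2) F).map σ *
            (!![0, 1; -δ⁻¹, 0])⁻¹ = (g : Matrix (Fin 2) (Fin 2) F) ∨
         !![0, 1; -δ⁻¹, 0] * (g : Matrix (Fin 2) (Fin 2) F).map σ *
            (!![0, 1; -δ⁻¹, 0])⁻¹ = -(g : Matrix (Fin 2) (Fin 2) F)) ∧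
        ∃ c : F, c ≠ 0 ∧ (g : Matrix (Fin 2) (Fin 2) F).mulVec v = c • w) :
    (2 : F) ≠ 0 ∧
    (∃ x : F, x ≠ 0 ∧ δ = (x * σ x)⁻¹) ∧
    (∃ Y : Matrix (Fin 2) (Fin 2) F, IsUnit Y.det ∧ Y 0 1 = 0 ∧ Y 1 0 = 0 ∧
      ∀ g : SpecialLinearGroup (Fin 2) F,
        !![0, 1; -δ⁻¹, 0] * ((Y * (g : Matrix (Fin 2) (Fin 2) F) * Y⁻¹).map σ) *
            (!![0, 1; -δ⁻¹, 0])⁻¹ =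
          Y * (!![0, 1; -1, 0] * (g : Matrix (Fin 2) (Fin 2) F).map σ *
            (!![0, 1; -1, 0])⁻¹) * Y⁻¹) := by
  have hN : LinesMeetNormOneOrNegOne σ δ := by
    intro w hw
    obtain ⟨g, hg, c, -, hgw⟩ := htrans ![1, 0] w (by simp) hw
    refine ⟨c, ?_⟩
    rw [← hgw]
    exact normForm_mulVec_eq_one_or_neg_one hδ g.prop hg
  obtain ⟨x, hx⟩ := exists_mul_conj_eq_one hN
  have hx0 : x ≠ 0 := by rintro rfl; simp at hx
  have hδx : δ = (x * σ x)⁻¹ := eq_inv_of_mul_eq_one_left (by rw [← hx, mul_comm])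
  refine ⟨two_ne_zero_of_mul_conj_eq_one hN hx, ⟨x, hx0, hδx⟩,
    !![x⁻¹, 0; 0, 1], by simp [hx0], rfl, rfl, fun g => ?_⟩
  rw [hδx, mul_inv, ← map_inv₀]
  simpa only [flipMap, flipMatrix, inv_one] using flipMap_conj_diagonal (σ := σ) (inv_ne_zero hx0) g

/-- If the projective centralizer `PK_{δ,σ}` of the flip
`θ_{δ,σ}` acts transitively on the projective line `ℙ¹(F)`, then `char F ≠ 2`,
`δ = (x·σ(x))⁻¹` for some `x ≠ 0`, and `θ_{δ,σ}` is conjugate to `θ_{1,σ}` by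
an inner automorphism of `GL₂(F)` given by an invertible diagonal matrix. -/
theorem transitive_flip_conjugate_to_standard {F : Type*} [Field F]
    (σ : F ≃+* F) (hσ : ∀ x, σ (σ x) = x)
    (δ : F) (hδ : δ ≠ 0) (hfix : σ δ = δ)
    (htrans : ∀ v w : Fin 2 → F, v ≠ 0 → w ≠ 0 →
      ∃ g : SpecialLinearGroup (Fin 2) F,
        (!![0, 1; -δ⁻¹, 0] * (g : Matrix (Fin 2) (Fin 2) F).map σ *
            (!![0, 1; -δ⁻¹, 0])⁻¹ = (g : Matrix (Fin 2) (Fin 2) F) ∨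
         !![0, 1; -δ⁻¹, 0] * (g : Matrix (Fin 2) (Fin 2) F).map σ *
            (!![0, 1; -δ⁻¹, 0])⁻¹ = -(g : Matrix (Fin 2) (Fin 2) F)) ∧
        ∃ c : F, c ≠ 0 ∧ (g : Matrix (Fin 2) (Fin 2) F).mulVec v = c • w) :
    (2 : F) ≠ 0 ∧
    (∃ x : F, x ≠ 0 ∧ δ = (x * σ x)⁻¹) ∧
    (∃ Y : Matrix (Fin 2) (Fin 2) F, IsUnit Y.det ∧ Y 0 1 = 0 ∧ Y 1 0 = 0 ∧
      ∀ g : SpecialLinearGroup (Fin 2) F,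
        !![0, 1; -δ⁻¹, 0] * ((Y * (g : Matrix (Fin 2) (Fin 2) F) * Y⁻¹).map σ) *
            (!![0, 1; -δ⁻¹, 0])⁻¹ =
          Y * (!![0, 1; -1, 0] * (g : Matrix (Fin 2) (Fin 2) F).map σ *
            (!![0, 1; -1, 0])⁻¹) * Y⁻¹) :=
  transitive_flip_conjugate_to_standard_general σ δ hδ htrans
end

section
/- Let F be a field and σ a ring automorphism of F with σ ∘ σ = id. The centralizer K_{1,σ} = {g ∈ SL₂(F) : θ_{1,σ}(g) = g} acts transitively on the projective line ℙ¹(F) if and only if: (a) there is no x ∈ F with x·σ(x) = -1, and (b) for all x, y ∈ F there exists z ∈ F with x·σ(x) + y·σ(y) = z·σ(z). -/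
/-!
The fixed points of `θ_{1,σ}` in `SL₂(F)` are the matrices `!![a, b; -σ b, σ a]` with
`a σ a + b σ b = 1`, and such a matrix sends `(1, 0)` to `(a, -σ b)`, a vector of norm one for the
hermitian form `x σ x + y σ y`. Hence `K_{1,σ}` is transitive on `ℙ¹(F)` exactly when every line
contains a vector of norm one, i.e. when `x σ x + y σ y` is a nonzero norm for every `(x, y) ≠ 0`:
this is (b), together with the anisotropy of the form, which is (a).
-/

open Matrix

section ProjectiveTransitivity

variable {n F : Type*} [Fintype n] [DecidableEq n] [Field F]

def IsProjTransitive (H : Subgroup (SpecialLinearGroup n F)) : Prop :=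
  ∀ v w : n → F, v ≠ 0 → w ≠ 0 →
    ∃ g ∈ H, ∃ c : F, c ≠ 0 ∧ (g : Matrix n n F) *ᵥ v = c • w

theorem isProjTransitive_of_forall_exists (H : Subgroup (SpecialLinearGroup n F)) (e : n → F)
    (h : ∀ v : n → F, v ≠ 0 → ∃ g ∈ H, ∃ c : F, c ≠ 0 ∧ (g : Matrix n n F) *ᵥ e = c • v) :
    IsProjTransitive H := by
  intro v w hv hw
  obtain ⟨gv, hgv, cv, hcv, hev⟩ := h v hv
  obtain ⟨gw, hgw, cw, hcw, hew⟩ := h w hw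
  have hinv : ((gv⁻¹ : SpecialLinearGroup n F) : Matrix n n F) *ᵥ v = cv⁻¹ • e := by
    have hv' : v = cv⁻¹ • (gv : Matrix n n F) *ᵥ e := by rw [hev, inv_smul_smul₀ hcv]
    rw [hv', mulVec_smul, mulVec_mulVec, ← Matrix.SpecialLinearGroup.coe_mul, inv_mul_cancel,
      Matrix.SpecialLinearGroup.coe_one, one_mulVec]
  refine ⟨gw * gv⁻¹, H.mul_mem hgw (H.inv_mem hgv), cv⁻¹ * cw, by simp [hcv, hcw], ?_⟩
  rw [Matrix.SpecialLinearGroup.coe_mul, ← mulVec_mulVec, hinv, mulVec_smul, hew, smul_smul]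

end ProjectiveTransitivity

section StandardFlip

variable {F : Type*} [Field F] (σ : F ≃+* F)

noncomputable def standardFlip (X : Matrix (Fin 2) (Fin 2) F) : Matrix (Fin 2) (Fin 2) F :=
  !![0, 1; -1, 0] * X.map σ * (!![0, 1; -1, 0])⁻¹

lemma standardFlip_of (a b c d : F) :
    standardFlip σ !![a, b; c, d] = !![σ d, -σ c; -σ b, σ a] := by
  have hinv : (!![0, 1; -1, 0] : Matrix (Fin 2) (Fin 2) F)⁻¹ = !![0, -1; 1, 0] :=
    inv_eq_right_inv (by simp [one_fin_two])
  have hmap : (!![a, b; c, d] : Matrix (Fin 2) (Fin 2) F).map σ = !![σ a, σ b; σ c, σ d] := by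
    ext i j; fin_cases i <;> fin_cases j <;> rfl
  rw [standardFlip, hinv, hmap]
  simp

lemma standardFlip_mul (X Y : Matrix (Fin 2) (Fin 2) F) :
    standardFlip σ (X * Y) = standardFlip σ X * standardFlip σ Y := by
  have hA : ∀ M : Matrix (Fin 2) (Fin 2) F, (!![0, 1; -1, 0])⁻¹ * (!![0, 1; -1, 0] * M) = M :=
    fun M => by rw [← Matrix.mul_assoc, nonsing_inv_mul _ (by simp [det_fin_two_of]),
      Matrix.one_mul]
  simp only [standardFlip, Matrix.map_mul, Matrix.mul_assoc, hA]

lemma standardFlip_one : standardFlip σ 1 = 1 := by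
  rw [one_fin_two, standardFlip_of]
  simp

noncomputable def standardFlipHom : SpecialLinearGroup (Fin 2) F →* Matrix (Fin 2) (Fin 2) F where
  toFun g := standardFlip σ g
  map_one' := standardFlip_one σ
  map_mul' g h := standardFlip_mul σ g h

/-- The centralizer `K_{1,σ}` of the standard flip. -/
noncomputable def flipFixedSubgroup : Subgroup (SpecialLinearGroup (Fin 2) F) :=
  (standardFlipHom σ).eqLocus SpecialLinearGroup.coeMonoidHom

variable {σ}

lemma mem_flipFixedSubgroup {g : SpecialLinearGroup (Fin 2) F} :
    g ∈ flipFixedSubgroup σ ↔ standardFlip σ g = g := Iff.rfl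

lemma norm_add_norm_col_eq_one (hσ : ∀ x, σ (σ x) = x) {g : SpecialLinearGroup (Fin 2) F}
    (hg : g ∈ flipFixedSubgroup σ) :
    g 0 0 * σ (g 0 0) + g 1 0 * σ (g 1 0) = 1 := by
  -- a fixed matrix is `!![a, b; -σ b, σ a]`, whose determinant is the norm of its first column
  have hfix := mem_flipFixedSubgroup.1 hg
  rw [eta_fin_two (g : Matrix (Fin 2) (Fin 2) F), standardFlip_of] at hfix
  have h10 : g 1 0 = -σ (g 0 1) := by simpa using (congrFun (congrFun hfix 1) 0).symm
  have h11 : g 1 1 = σ (g 0 0) := by simpa using (congrFun (congrFun hfix 1) 1).symm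
  have hdet := g.det_coe
  rw [det_fin_two, h11, h10] at hdet
  rw [h10, map_neg, hσ]
  linear_combination hdet

lemma exists_mem_mulVec_eq_of_norm_add_norm_eq_one (hσ : ∀ x, σ (σ x) = x) {a b : F}
    (h : a * σ a + b * σ b = 1) :
    ∃ g ∈ flipFixedSubgroup σ, (g : Matrix (Fin 2) (Fin 2) F) *ᵥ ![1, 0] = ![a, -σ b] := by
  refine ⟨(⟨!![a, b; -σ b, σ a], by rw [det_fin_two_of]; linear_combination h⟩ :
    SpecialLinearGroup (Fin 2) F), mem_flipFixedSubgroup.2 ?_, ?_⟩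
  · simp [standardFlip_of, hσ]
  · ext i; fin_cases i <;> simp

lemma norm_add_norm_ne_zero (hn : ¬ ∃ x : F, x * σ x = -1) {v : Fin 2 → F} (hv : v ≠ 0) :
    v 0 * σ (v 0) + v 1 * σ (v 1) ≠ 0 := by
  intro h
  by_cases h1 : v 1 = 0
  · have h0 : v 0 = 0 := by simpa [h1] using h
    exact hv (by ext i; fin_cases i <;> simp [h0, h1])
  · refine hn ⟨v 0 / v 1, ?_⟩
    have hσ1 : σ (v 1) ≠ 0 := by simpa using h1
    rw [map_div₀]
    field_simp
    linear_combination h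

lemma exists_smul_eq_of_norm_add_norm_eq_one (hσ : ∀ x, σ (σ x) = x)
    (hn : ¬ ∃ x : F, x * σ x = -1) (hs : ∀ x y : F, ∃ z : F, x * σ x + y * σ y = z * σ z)
    {v : Fin 2 → F} (hv : v ≠ 0) :
    ∃ a b c : F, c ≠ 0 ∧ a * σ a + b * σ b = 1 ∧ ![a, -σ b] = c • v := by
  obtain ⟨z, hz⟩ := hs (v 0) (v 1)
  have hz0 : z ≠ 0 := by
    rintro rfl
    exact norm_add_norm_ne_zero hn hv (by simpa using hz)
  have hσz : σ z ≠ 0 := by simpa using hz0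
  refine ⟨v 0 / z, -σ (v 1 / z), z⁻¹, inv_ne_zero hz0, ?_, ?_⟩
  · simp only [map_neg, map_div₀, hσ]
    field_simp
    linear_combination hz
  · ext i; fin_cases i <;> simp [hσ, div_eq_inv_mul]

theorem isProjTransitive_flipFixedSubgroup (hσ : ∀ x, σ (σ x) = x)
    (hn : ¬ ∃ x : F, x * σ x = -1) (hs : ∀ x y : F, ∃ z : F, x * σ x + y * σ y = z * σ z) :
    IsProjTransitive (flipFixedSubgroup σ) := by
  refine isProjTransitive_of_forall_exists _ ![1, 0] fun v hv => ?_
  obtain ⟨a, b, c, hc, hab, hv⟩ := exists_smul_eq_of_norm_add_norm_eq_one hσ hn hs hv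
  obtain ⟨g, hg, hge⟩ := exists_mem_mulVec_eq_of_norm_add_norm_eq_one hσ hab
  exact ⟨g, hg, c, hc, hge.trans hv⟩

lemma IsProjTransitive.exists_mul_norm_add_norm_eq_one (hσ : ∀ x, σ (σ x) = x)
    (hK : IsProjTransitive (flipFixedSubgroup σ)) {v : Fin 2 → F} (hv : v ≠ 0) :
    ∃ c : F, c * σ c * (v 0 * σ (v 0) + v 1 * σ (v 1)) = 1 := by
  obtain ⟨g, hg, c, -, hgv⟩ := hK ![1, 0] v (by simp) hv
  have h0 : g 0 0 = c * v 0 := by simpa using congrFun hgv 0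
  have h1 : g 1 0 = c * v 1 := by simpa using congrFun hgv 1
  have hnorm := norm_add_norm_col_eq_one hσ hg
  rw [h0, h1] at hnorm
  exact ⟨c, by simp only [map_mul] at hnorm; linear_combination hnorm⟩

lemma IsProjTransitive.not_exists_norm_eq_neg_one (hσ : ∀ x, σ (σ x) = x)
    (hK : IsProjTransitive (flipFixedSubgroup σ)) : ¬ ∃ x : F, x * σ x = -1 := by
  rintro ⟨x, hx⟩
  obtain ⟨c, hc⟩ := hK.exists_mul_norm_add_norm_eq_one hσ (v := ![x, 1]) (by simp)
  simp [hx] at hc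

lemma IsProjTransitive.exists_norm_eq_norm_add_norm (hσ : ∀ x, σ (σ x) = x)
    (hK : IsProjTransitive (flipFixedSubgroup σ)) (x y : F) :
    ∃ z : F, x * σ x + y * σ y = z * σ z := by
  by_cases hxy : ![x, y] = 0
  · have hx : x = 0 := by simpa using congrFun hxy 0
    have hy : y = 0 := by simpa using congrFun hxy 1
    exact ⟨0, by simp [hx, hy]⟩
  obtain ⟨c, hc⟩ := hK.exists_mul_norm_add_norm_eq_one hσ hxy
  simp only [cons_val_zero, cons_val_one] at hc
  have hc0 : c ≠ 0 := by rintro rfl; simp at hc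
  have hσc : σ c ≠ 0 := by simpa using hc0
  refine ⟨c⁻¹, ?_⟩
  rw [map_inv₀]
  field_simp
  linear_combination hc

end StandardFlip

/-- The centralizer `K_{1,σ}` of the standard flip `θ_{1,σ}`
acts transitively on `ℙ¹(F)` iff `-1` is not a norm and a sum of two norms is
a norm. -/
theorem standard_flip_transitive_iff {F : Type*} [Field F]
    (σ : F ≃+* F) (hσ : ∀ x, σ (σ x) = x) :
    (∀ v w : Fin 2 → F, v ≠ 0 → w ≠ 0 →
      ∃ g : SpecialLinearGroup (Fin 2) F,
        !![0, 1; -1, 0] * (g : Matrix (Fin 2) (Fin 2) F).map σ *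
            (!![0, 1; -1, 0])⁻¹ = (g : Matrix (Fin 2) (Fin 2) F) ∧
        ∃ c : F, c ≠ 0 ∧ (g : Matrix (Fin 2) (Fin 2) F).mulVec v = c • w) ↔
    ((¬ ∃ x : F, x * σ x = -1) ∧
      ∀ x y : F, ∃ z : F, x * σ x + y * σ y = z * σ z) := by
  change IsProjTransitive (flipFixedSubgroup σ) ↔ _
  exact ⟨fun hK => ⟨hK.not_exists_norm_eq_neg_one hσ, hK.exists_norm_eq_norm_add_norm hσ⟩,
    fun ⟨hn, hs⟩ => isProjTransitive_flipFixedSubgroup hσ hn hs⟩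
end

section
/- Let (X, (U_x)_{x∈X}) be a Moufang set with little projective group G, fix distinct 0, ∞ ∈ X, set U := X \ {∞} with the group operation a + b := a·α_b, and fix τ ∈ G with 0·τ = ∞ and ∞·τ = 0; set γ_a := τ⁻¹ α_a τ. Let φ be a group automorphism of (U, +), extended to a permutation of X by ∞·φ := ∞. Then there exists an automorphism χ of G with χ(α_a) = γ_{a·φ} and χ(γ_a) = α_{a·φ⁻¹} for all a ∈ U if and only if (φ∘τ)∘(φ∘τ) = id as a permutation of X. Moreover, in this case χ is involutory (χ ∘ χ = id) and φ is an automorphism of the Moufang set, i.e. φ⁻¹ U_x φ = U_{x·φ} for all x ∈ X. -/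
/-- A Moufang set: a set `X` with a family of subgroups `U x ≤ Sym(X)` (the
root groups), each fixing `x` and acting sharply transitively on `X \ {x}`,
such that conjugation by any root element permutes the root groups
accordingly.  Permutations act on the right, so the paper's `x·g` is `g x` and
the paper's product `g·h` (first `g`, then `h`) is `h * g` in Lean. -/
structure MoufangSet (X : Type*) where
  U : X → Subgroup (Equiv.Perm X)
  fixes : ∀ x : X, ∀ g ∈ U x, g x = x
  regular : ∀ x y z : X, y ≠ x → z ≠ x → ∃! g : Equiv.Perm X, g ∈ U x ∧ g y = z
  conj : ∀ x y : X, ∀ g ∈ U x,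
    Subgroup.map (MulAut.conj g).toMonoidHom (U y) = U (g y)

/-- The little projective group of a Moufang set. -/
def MoufangSet.lpg {X : Type*} (M : MoufangSet X) : Subgroup (Equiv.Perm X) :=
  Subgroup.closure (⋃ x : X, (M.U x : Set (Equiv.Perm X)))

/-!
When `τ ∘ φ` is an involution, conjugation by `σ = τ * φ` is the required automorphism.
Additivity of `φ` means `φ * α a * φ⁻¹ = α (φ a)`, so `φ` normalises `U ∞`; the relation
`τ * φ * τ = φ⁻¹` then shows that `φ` also conjugates `U 0 = τ U ∞ τ⁻¹` onto itself. A permutation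
that conjugates `U ∞` and one further root group correctly permutes all root groups (they are
conjugate under `U ∞`), so `φ`, hence `σ`, is an automorphism of the Moufang set and normalises
`G`.

Conversely, `χ ∘ χ` is the identity on the generators `U 0 ∪ U ∞` of `G`, so `χ` is involutive,
and writing `U y = α y * U 0 * (α y)⁻¹` shows that `χ` maps `U y` into `U (τ (φ y))`. A
nontrivial element of `U x` therefore lies in `U ((τ ∘ φ)² x)` and fixes that point, which forces
`(τ ∘ φ)² x = x`. Nontrivial root elements exist because `τ ≠ 1` rules out `|X| = 2`.
-/

open Equiv Pointwise ConjAct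

lemma Equiv.Perm.apply_ne_of_fixed {X : Type*} {f : Perm X} {x y : X} (hx : f x = x)
    (hy : y ≠ x) : f y ≠ x :=
  (f.injective.ne_iff' hx).2 hy

lemma Equiv.Perm.inv_apply_ne_of_fixed {X : Type*} {f : Perm X} {x y : X} (hx : f x = x)
    (hy : y ≠ x) : f⁻¹ y ≠ x :=
  Perm.apply_ne_of_fixed (Perm.inv_eq_iff_eq.2 hx.symm) hy

lemma Subgroup.mem_toConjAct_smul_iff {G : Type*} [Group G] {s g : G} {H : Subgroup G} :
    g ∈ toConjAct s • H ↔ s⁻¹ * g * s ∈ H := by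
  rw [mem_pointwise_smul_iff_inv_smul_mem, ← map_inv, toConjAct_smul, inv_inv]

namespace MoufangSet

variable {X : Type*} (M : MoufangSet X)

def autGroup : Subgroup (Perm X) where
  carrier := {s | ∀ x, toConjAct s • M.U x = M.U (s x)}
  one_mem' x := by simp
  mul_mem' {a b} ha hb x := by rw [map_mul, mul_smul, hb, ha]; rfl
  inv_mem' {s} hs x := by
    rw [map_inv, inv_smul_eq_iff, hs]
    simp

variable {M}

lemma smul_rootGroup {s : Perm X} (hs : s ∈ M.autGroup) (x : X) :
    toConjAct s • M.U x = M.U (s x) :=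
  hs x

lemma conj_mem_rootGroup {s : Perm X} (hs : s ∈ M.autGroup) {g : Perm X} {x : X}
    (hg : g ∈ M.U x) : s * g * s⁻¹ ∈ M.U (s x) := by
  rw [← smul_rootGroup hs, Subgroup.mem_toConjAct_smul_iff]
  simpa [mul_assoc] using hg

lemma exists_mem_rootGroup_apply_eq {x y z : X} (hy : y ≠ x) (hz : z ≠ x) :
    ∃ g ∈ M.U x, g y = z :=
  let ⟨g, hg, _⟩ := M.regular x y z hy hz; ⟨g, hg⟩

lemma eq_of_mem_rootGroup_of_apply_eq {g : Perm X} {x y : X} (hg : g ∈ M.U x) (hg1 : g ≠ 1)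
    (hy : g y = y) : y = x := by
  by_contra hyx
  exact hg1 ((M.regular x y y hyx hyx).unique ⟨hg, hy⟩ ⟨one_mem _, rfl⟩)

variable (M)

lemma rootGroup_le_lpg (x : X) : M.U x ≤ M.lpg :=
  fun _ hg => Subgroup.subset_closure (Set.mem_iUnion.2 ⟨x, hg⟩)

lemma rootGroup_le_autGroup (x : X) : M.U x ≤ M.autGroup :=
  fun g hg y => M.conj x y g hg

lemma lpg_le_autGroup : M.lpg ≤ M.autGroup :=
  (Subgroup.closure_le _).2 (Set.iUnion_subset fun x => M.rootGroup_le_autGroup x)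

lemma smul_lpg {s : Perm X} (hs : s ∈ M.autGroup) : toConjAct s • M.lpg = M.lpg := by
  rw [lpg, Subgroup.smul_closure, Set.smul_set_iUnion]
  congr 1
  simp_rw [← Subgroup.coe_pointwise_smul, smul_rootGroup hs]
  exact s.surjective.iUnion_comp fun x => (M.U x : Set (Perm X))

def lpgConj (s : Perm X) (hs : s ∈ M.autGroup) : M.lpg ≃* M.lpg :=
  ((MulAut.conj s).subgroupMap M.lpg).trans (MulEquiv.subgroupCongr (M.smul_lpg hs))

@[simp]
lemma coe_lpgConj_apply {s : Perm X} (hs : s ∈ M.autGroup) (g : M.lpg) :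
    (M.lpgConj s hs g : Perm X) = s * g * s⁻¹ :=
  rfl

variable {M}

lemma mem_autGroup_of_smul_rootGroup {a b : X} (hab : a ≠ b) {s : Perm X}
    (hb : toConjAct s • M.U b = M.U (s b)) (ha : toConjAct s • M.U a = M.U (s a)) :
    s ∈ M.autGroup := by
  intro x
  by_cases hxb : x = b
  · rwa [hxb]
  obtain ⟨u, hu, rfl⟩ := M.exists_mem_rootGroup_apply_eq hab hxb
  have hsu : s * u * s⁻¹ ∈ M.autGroup := by
    refine M.rootGroup_le_autGroup (s b) ?_
    rw [← hb, Subgroup.mem_toConjAct_smul_iff]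
    simpa [mul_assoc] using hu
  calc toConjAct s • M.U (u a) = toConjAct (s * u * s⁻¹) • toConjAct s • M.U a := by
        rw [← smul_rootGroup (M.rootGroup_le_autGroup b hu), ← mul_smul, ← mul_smul,
          ← map_mul, ← map_mul, inv_mul_cancel_right]
    _ = M.U (s (u a)) := by
        rw [ha, smul_rootGroup hsu]
        simp

lemma lpg_eq_closure_union {a b : X} (hab : a ≠ b) :
    M.lpg = Subgroup.closure (M.U a ∪ M.U b) := by
  have sub : ∀ {g}, g ∈ M.U a ∨ g ∈ M.U b →
      g ∈ Subgroup.closure (M.U a ∪ M.U b : Set (Perm X)) :=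
    fun hg => Subgroup.subset_closure hg
  refine le_antisymm ((Subgroup.closure_le _).2 (Set.iUnion_subset fun x g hg => ?_))
    ((Subgroup.closure_le _).2 (Set.union_subset (M.rootGroup_le_lpg a) (M.rootGroup_le_lpg b)))
  by_cases hxb : x = b
  · exact sub (Or.inr (hxb ▸ hg))
  obtain ⟨u, hu, rfl⟩ := M.exists_mem_rootGroup_apply_eq hab hxb
  rw [SetLike.mem_coe, ← smul_rootGroup (M.rootGroup_le_autGroup b hu),
    Subgroup.mem_toConjAct_smul_iff] at hg
  have hu' : u ∈ Subgroup.closure (M.U a ∪ M.U b : Set (Perm X)) := sub (Or.inr hu)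
  simpa [mul_assoc] using mul_mem (mul_mem hu' (sub (Or.inl hg))) (inv_mem hu')

lemma lpg_hom_ext {a b : X} (hab : a ≠ b) {H : Type*} [Monoid H] {f f' : M.lpg →* H}
    (h : ∀ g : M.lpg, (g : Perm X) ∈ M.U a ∨ (g : Perm X) ∈ M.U b → f g = f' g) : f = f' := by
  set S := {g : M.lpg | (g : Perm X) ∈ M.U a ∨ (g : Perm X) ∈ M.U b}
  refine MonoidHom.eq_of_eqOn_dense (s := S) ?_ h
  have hle := (lpg_eq_closure_union (M := M) hab).ge
  have key : ∀ g (hg : g ∈ Subgroup.closure (M.U a ∪ M.U b : Set (Perm X))),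
      (⟨g, hle hg⟩ : M.lpg) ∈ Subgroup.closure S := by
    intro g hg
    induction hg using Subgroup.closure_induction with
    | mem g hg => exact Subgroup.subset_closure hg
    | one => exact one_mem _
    | mul g h _ _ hg hh => exact mul_mem hg hh
    | inv g _ hg => exact inv_mem hg
  rw [eq_top_iff]
  rintro ⟨g, hg⟩ -
  exact key g ((lpg_eq_closure_union hab).le hg)

lemma exists_ne_one_mem_rootGroup {a b c : X} (hab : a ≠ b) (hac : a ≠ c) (hbc : b ≠ c)
    (x : X) : ∃ g ∈ M.U x, g ≠ 1 := by
  have of_ne {y z : X} (hy : y ≠ x) (hz : z ≠ x) (hyz : y ≠ z) : ∃ g ∈ M.U x, g ≠ 1 := by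
    obtain ⟨g, hg, hgy⟩ := M.exists_mem_rootGroup_apply_eq hy hz
    exact ⟨g, hg, fun h => hyz (by rw [← hgy, h]; rfl)⟩
  by_cases hxa : x = a
  · subst hxa; exact of_ne hab.symm hac.symm hbc
  by_cases hxb : x = b
  · subst hxb; exact of_ne (Ne.symm hxa) hbc.symm hac
  · exact of_ne (Ne.symm hxa) (Ne.symm hxb) hab

lemma exists_ne_ne_of_mem_lpg {a b : X} (hab : a ≠ b) {τ : Perm X} (hτ : τ ∈ M.lpg)
    (hτa : τ a = b) : ∃ c, c ≠ a ∧ c ≠ b := by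
  by_contra! h
  have h' (c : X) : c = a ∨ c = b := or_iff_not_imp_left.2 (h c)
  have hU : ∀ x, M.U x ≤ ⊥ := by
    intro x g hg
    rw [Subgroup.mem_bot]
    ext p
    by_cases hpx : p = x
    · simp [hpx, M.fixes x g hg]
    have hgpx := Perm.apply_ne_of_fixed (M.fixes x g hg) hpx
    rw [Perm.one_apply]
    rcases h' p with hp | hp <;> rcases h' x with hx | hx <;> rcases h' (g p) with hq | hq <;>
      grind
  have hτ1 : τ = 1 := (Subgroup.closure_le _).2 (Set.iUnion_subset hU) hτ
  exact hab (by simpa [hτ1] using hτa)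

variable {zero infty : X} {α : X → Perm X} {τ φ : Perm X}

lemma eq_alpha_of_mem_rootGroup (hne : zero ≠ infty)
    (hα : ∀ a, a ≠ infty → α a ∈ M.U infty ∧ α a zero = a) {g : Perm X}
    (hg : g ∈ M.U infty) : g zero ≠ infty ∧ g = α (g zero) := by
  have hg0 := Perm.apply_ne_of_fixed (M.fixes infty g hg) hne
  exact ⟨hg0, (M.regular infty zero (g zero) hne hg0).unique ⟨hg, rfl⟩ (hα _ hg0)⟩

lemma conj_alpha (hα : ∀ a, a ≠ infty → α a ∈ M.U infty ∧ α a zero = a)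
    (hφinfty : φ infty = infty)
    (hφadd : ∀ a b : X, a ≠ infty → b ≠ infty → φ (α b a) = α (φ b) (φ a))
    {a : X} (ha : a ≠ infty) : φ * α a * φ⁻¹ = α (φ a) := by
  ext x
  by_cases hx : x = infty
  · have hφa := Perm.apply_ne_of_fixed hφinfty ha
    have hφinv : φ⁻¹ infty = infty := Perm.inv_eq_iff_eq.2 hφinfty.symm
    simp only [Perm.mul_apply, hx, hφinv, M.fixes infty _ (hα a ha).1,
      M.fixes infty _ (hα _ hφa).1, hφinfty]
  · simpa using hφadd (φ⁻¹ x) a (Perm.inv_apply_ne_of_fixed hφinfty hx) ha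

lemma inv_conj_alpha (hα : ∀ a, a ≠ infty → α a ∈ M.U infty ∧ α a zero = a)
    (hφinfty : φ infty = infty)
    (hφadd : ∀ a b : X, a ≠ infty → b ≠ infty → φ (α b a) = α (φ b) (φ a))
    {a : X} (ha : a ≠ infty) : φ⁻¹ * α a * φ = α (φ⁻¹ a) := by
  have h := conj_alpha hα hφinfty hφadd (Perm.inv_apply_ne_of_fixed hφinfty ha)
  rw [show φ (φ⁻¹ a) = a from φ.apply_symm_apply a] at h
  rw [← h]
  group

lemma mem_normalizer_rootGroup (hne : zero ≠ infty)
    (hα : ∀ a, a ≠ infty → α a ∈ M.U infty ∧ α a zero = a) (hφinfty : φ infty = infty)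
    (hφadd : ∀ a b : X, a ≠ infty → b ≠ infty → φ (α b a) = α (φ b) (φ a)) :
    φ ∈ Subgroup.normalizer (M.U infty : Set (Perm X)) := by
  refine Subgroup.mem_normalizer_iff.2 fun g => ⟨fun hg => ?_, fun hg => ?_⟩
  · obtain ⟨hg0, hgα⟩ := eq_alpha_of_mem_rootGroup hne hα hg
    rw [hgα, conj_alpha hα hφinfty hφadd hg0]
    exact (hα _ (Perm.apply_ne_of_fixed hφinfty hg0)).1
  · obtain ⟨hg0, hgα⟩ := eq_alpha_of_mem_rootGroup hne hα hg
    have hφg0 : φ⁻¹ ((φ * g * φ⁻¹) zero) ≠ infty :=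
      fun h => hg0 (by rw [← hφinfty, ← h]; simp)
    rw [show g = φ⁻¹ * (φ * g * φ⁻¹) * φ by group, hgα, inv_conj_alpha hα hφinfty hφadd hg0]
    exact (hα _ hφg0).1

lemma apply_zero_eq_zero (hne : zero ≠ infty)
    (hα : ∀ a, a ≠ infty → α a ∈ M.U infty ∧ α a zero = a) (hφinfty : φ infty = infty)
    (hφadd : ∀ a b : X, a ≠ infty → b ≠ infty → φ (α b a) = α (φ b) (φ a)) :
    φ zero = zero := by
  have hφ0 := Perm.apply_ne_of_fixed hφinfty hne
  apply (α (φ zero)).injective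
  rw [(hα _ hφ0).2, ← hφadd zero zero hne hne, (hα zero hne).2]

lemma rootGroup_zero_eq (hτG : τ ∈ M.lpg) (hτi : τ infty = zero) :
    M.U zero = toConjAct τ • M.U infty := by
  rw [smul_rootGroup (M.lpg_le_autGroup hτG), hτi]

lemma conj_alpha_mem_rootGroup (hα : ∀ a, a ≠ infty → α a ∈ M.U infty ∧ α a zero = a)
    (hτG : τ ∈ M.lpg) (hτi : τ infty = zero) {a : X} (ha : a ≠ infty) :
    τ * α a * τ⁻¹ ∈ M.U zero :=
  hτi ▸ conj_mem_rootGroup (M.lpg_le_autGroup hτG) (hα a ha).1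

lemma exists_eq_conj_alpha (hne : zero ≠ infty)
    (hα : ∀ a, a ≠ infty → α a ∈ M.U infty ∧ α a zero = a)
    (hτG : τ ∈ M.lpg) (hτi : τ infty = zero) {g : Perm X} (hg : g ∈ M.U zero) :
    ∃ a, a ≠ infty ∧ g = τ * α a * τ⁻¹ := by
  rw [rootGroup_zero_eq hτG hτi, Subgroup.mem_toConjAct_smul_iff] at hg
  obtain ⟨ha, hgα⟩ := eq_alpha_of_mem_rootGroup hne hα hg
  exact ⟨_, ha, by rw [← hgα]; group⟩

lemma mem_autGroup_of_involutive (hne : zero ≠ infty)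
    (hα : ∀ a, a ≠ infty → α a ∈ M.U infty ∧ α a zero = a)
    (hτG : τ ∈ M.lpg) (hτ0 : τ zero = infty) (hτi : τ infty = zero)
    (hφinfty : φ infty = infty)
    (hφadd : ∀ a b : X, a ≠ infty → b ≠ infty → φ (α b a) = α (φ b) (φ a))
    (hσ : Function.Involutive (τ ∘ φ)) : φ ∈ M.autGroup := by
  have hσ' : τ * φ * τ = φ⁻¹ := eq_inv_of_mul_eq_one_left (Equiv.ext hσ)
  have hτA := M.lpg_le_autGroup hτG
  have hN := mem_normalizer_rootGroup hne hα hφinfty hφadd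
  have hφτ : φ * τ = τ⁻¹ * φ⁻¹ := by rw [← hσ']; group
  refine mem_autGroup_of_smul_rootGroup hne
    (by rw [hφinfty]; exact Subgroup.conjAct_pointwise_smul_eq_self hN) ?_
  calc toConjAct φ • M.U zero = toConjAct τ⁻¹ • toConjAct φ⁻¹ • M.U infty := by
        rw [rootGroup_zero_eq hτG hτi, ← mul_smul, ← map_mul, hφτ, map_mul, mul_smul]
    _ = M.U (φ zero) := by
        rw [Subgroup.conjAct_pointwise_smul_eq_self (inv_mem hN), smul_rootGroup (inv_mem hτA),
          apply_zero_eq_zero hne hα hφinfty hφadd, Perm.inv_eq_iff_eq.2 hτ0.symm]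

-- `τ * α a * τ⁻¹` is the paper's `γ_a = τ⁻¹ α_a τ`, composed in Lean's order.
variable (M infty α τ φ) in
def IsFlip (χ : M.lpg →* M.lpg) : Prop :=
  (∀ a : X, a ≠ infty → ∀ g : M.lpg, (g : Perm X) = α a →
    (χ g : Perm X) = τ * α (φ a) * τ⁻¹) ∧
  (∀ a : X, a ≠ infty → ∀ g : M.lpg, (g : Perm X) = τ * α a * τ⁻¹ →
    (χ g : Perm X) = α (φ⁻¹ a))

lemma exists_isFlip (hne : zero ≠ infty)
    (hα : ∀ a, a ≠ infty → α a ∈ M.U infty ∧ α a zero = a)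
    (hτG : τ ∈ M.lpg) (hτ0 : τ zero = infty) (hτi : τ infty = zero)
    (hφinfty : φ infty = infty)
    (hφadd : ∀ a b : X, a ≠ infty → b ≠ infty → φ (α b a) = α (φ b) (φ a))
    (hσ : Function.Involutive (τ ∘ φ)) :
    ∃ χ : M.lpg ≃* M.lpg, IsFlip M infty α τ φ χ := by
  have hσ' : τ * φ * τ = φ⁻¹ := eq_inv_of_mul_eq_one_left (Equiv.ext hσ)
  have hφA := mem_autGroup_of_involutive hne hα hτG hτ0 hτi hφinfty hφadd hσ
  refine ⟨M.lpgConj (τ * φ) (mul_mem (M.lpg_le_autGroup hτG) hφA),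
    fun a ha g hg => ?_, fun a ha g hg => ?_⟩
  · rw [MonoidHom.coe_coe, coe_lpgConj_apply, hg, ← conj_alpha hα hφinfty hφadd ha]
    group
  · rw [MonoidHom.coe_coe, coe_lpgConj_apply]
    calc τ * φ * g * (τ * φ)⁻¹ = (τ * φ * τ) * α a * (τ * φ * τ)⁻¹ := by rw [hg]; group
      _ = α (φ⁻¹ a) := by rw [hσ', inv_inv, inv_conj_alpha hα hφinfty hφadd ha]

lemma IsFlip.apply_apply (hne : zero ≠ infty)
    (hα : ∀ a, a ≠ infty → α a ∈ M.U infty ∧ α a zero = a)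
    (hτG : τ ∈ M.lpg) (hτi : τ infty = zero) (hφinfty : φ infty = infty)
    {χ : M.lpg →* M.lpg} (hχ : IsFlip M infty α τ φ χ) (g : M.lpg) : χ (χ g) = g := by
  suffices χ.comp χ = MonoidHom.id M.lpg from DFunLike.congr_fun this g
  refine lpg_hom_ext hne fun g hg => Subtype.ext ?_
  rcases hg with hg | hg
  · obtain ⟨a, ha, hga⟩ := exists_eq_conj_alpha hne hα hτG hτi hg
    simpa [hga] using hχ.1 _ (Perm.inv_apply_ne_of_fixed hφinfty ha) _ (hχ.2 a ha g hga)
  · obtain ⟨hg0, hgα⟩ := eq_alpha_of_mem_rootGroup hne hα hg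
    rw [MonoidHom.comp_apply, MonoidHom.id_apply,
      hχ.2 _ (Perm.apply_ne_of_fixed hφinfty hg0) _ (hχ.1 _ hg0 g hgα),
      Perm.inv_eq_iff_eq.2 rfl]
    exact hgα.symm

lemma IsFlip.mem_rootGroup (hne : zero ≠ infty)
    (hα : ∀ a, a ≠ infty → α a ∈ M.U infty ∧ α a zero = a)
    (hτG : τ ∈ M.lpg) (hτ0 : τ zero = infty) (hτi : τ infty = zero)
    (hφinfty : φ infty = infty)
    {χ : M.lpg →* M.lpg} (hχ : IsFlip M infty α τ φ χ) {g : M.lpg} {y : X}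
    (hg : (g : Perm X) ∈ M.U y) : (χ g : Perm X) ∈ M.U (τ (φ y)) := by
  by_cases hy : y = infty
  · subst hy
    obtain ⟨hg0, hgα⟩ := eq_alpha_of_mem_rootGroup hne hα hg
    rw [hχ.1 _ hg0 g hgα, hφinfty, hτi]
    exact conj_alpha_mem_rootGroup hα hτG hτi (Perm.apply_ne_of_fixed hφinfty hg0)
  set u : M.lpg := ⟨α y, M.rootGroup_le_lpg _ (hα y hy).1⟩
  have hu : ((u⁻¹ * g * u : M.lpg) : Perm X) ∈ M.U zero := by
    have := conj_mem_rootGroup (inv_mem (M.rootGroup_le_autGroup _ (hα y hy).1)) hg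
    simpa [u, Perm.inv_eq_iff_eq.2 (hα y hy).2.symm] using this
  obtain ⟨b, hb, hgb⟩ := exists_eq_conj_alpha hne hα hτG hτi hu
  have hφy := Perm.apply_ne_of_fixed hφinfty hy
  have hφb := Perm.inv_apply_ne_of_fixed hφinfty hb
  have key := conj_mem_rootGroup
    (M.lpg_le_autGroup (M.rootGroup_le_lpg _ (conj_alpha_mem_rootGroup hα hτG hτi hφy)))
    (hα _ hφb).1
  rw [show g = u * (u⁻¹ * g * u) * u⁻¹ by group, map_mul, map_mul, map_inv]
  simp only [Subgroup.coe_mul, Subgroup.coe_inv, hχ.1 y hy u rfl, hχ.2 b hb _ hgb]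
  rw [Perm.mul_apply, Perm.mul_apply, Perm.inv_eq_iff_eq.2 hτ0.symm, (hα _ hφy).2] at key
  simpa using key

lemma IsFlip.involutive_comp (hne : zero ≠ infty)
    (hα : ∀ a, a ≠ infty → α a ∈ M.U infty ∧ α a zero = a)
    (hτG : τ ∈ M.lpg) (hτ0 : τ zero = infty) (hτi : τ infty = zero)
    (hφinfty : φ infty = infty)
    {χ : M.lpg →* M.lpg} (hχ : IsFlip M infty α τ φ χ) : Function.Involutive (τ ∘ φ) := by
  intro x
  obtain ⟨c, hc0, hci⟩ := M.exists_ne_ne_of_mem_lpg hne hτG hτ0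
  obtain ⟨g, hg, hg1⟩ := M.exists_ne_one_mem_rootGroup hne hc0.symm hci.symm x
  have hχχg := hχ.mem_rootGroup hne hα hτG hτ0 hτi hφinfty
    (hχ.mem_rootGroup hne hα hτG hτ0 hτi hφinfty (g := ⟨g, M.rootGroup_le_lpg x hg⟩) hg)
  rw [hχ.apply_apply hne hα hτG hτi hφinfty] at hχχg
  exact M.eq_of_mem_rootGroup_of_apply_eq hg hg1 (M.fixes _ _ hχχg)

end MoufangSet

/-- Fix distinct `0, ∞ ∈ X`; for `a ≠ ∞` let `α a` be the
unique element of `U_∞` with `0·(α a) = a` (so `a + b = a·α_b`), let `τ ∈ G`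
interchange `0` and `∞`, and set `γ_a := τ⁻¹ α_a τ` (in Lean order
`τ * α a * τ⁻¹`).  Let `φ` be an automorphism of `(U, +)` extended to `X` by
`∞·φ = ∞`.  Then there is an automorphism `χ` of `G` with `χ(α_a) = γ_{aφ}`
and `χ(γ_a) = α_{aφ⁻¹}` iff `(φτ)² = id`; moreover, in that case any such `χ`
is involutory and `φ` is an automorphism of the Moufang set, i.e.
`φ⁻¹ U_x φ = U_{x·φ}` for all `x`. -/
theorem flip_automorphism_iff {X : Type*} (M : MoufangSet X)
    (zero infty : X) (hne : zero ≠ infty)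
    (α : X → Equiv.Perm X)
    (hα : ∀ a : X, a ≠ infty → α a ∈ M.U infty ∧ α a zero = a)
    (τ : Equiv.Perm X) (hτG : τ ∈ M.lpg) (hτ0 : τ zero = infty) (hτi : τ infty = zero)
    (φ : Equiv.Perm X) (hφinfty : φ infty = infty)
    (hφadd : ∀ a b : X, a ≠ infty → b ≠ infty → φ (α b a) = α (φ b) (φ a)) :
    ((∃ χ : M.lpg ≃* M.lpg,
        (∀ a : X, a ≠ infty → ∀ g : M.lpg, (g : Equiv.Perm X) = α a →
          ((χ g : Equiv.Perm X) = τ * α (φ a) * τ⁻¹)) ∧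
        (∀ a : X, a ≠ infty → ∀ g : M.lpg, (g : Equiv.Perm X) = τ * α a * τ⁻¹ →
          ((χ g : Equiv.Perm X) = α (φ⁻¹ a)))) ↔
      (∀ x : X, τ (φ (τ (φ x))) = x)) ∧
    ((∀ x : X, τ (φ (τ (φ x))) = x) →
      ((∀ χ : M.lpg ≃* M.lpg,
        ((∀ a : X, a ≠ infty → ∀ g : M.lpg, (g : Equiv.Perm X) = α a →
          ((χ g : Equiv.Perm X) = τ * α (φ a) * τ⁻¹)) ∧
        (∀ a : X, a ≠ infty → ∀ g : M.lpg, (g : Equiv.Perm X) = τ * α a * τ⁻¹ →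
          ((χ g : Equiv.Perm X) = α (φ⁻¹ a)))) →
        ∀ g : M.lpg, χ (χ g) = g) ∧
      (∀ x : X, Subgroup.map (MulAut.conj φ).toMonoidHom (M.U x) = M.U (φ x)))) :=
  ⟨⟨fun ⟨χ, hχ⟩ =>
        MoufangSet.IsFlip.involutive_comp (χ := χ.toMonoidHom) hne hα hτG hτ0 hτi hφinfty hχ,
      MoufangSet.exists_isFlip hne hα hτG hτ0 hτi hφinfty hφadd⟩,
    fun hσ => ⟨fun χ hχ =>
        MoufangSet.IsFlip.apply_apply (χ := χ.toMonoidHom) hne hα hτG hτi hφinfty hχ,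
      MoufangSet.mem_autGroup_of_involutive hne hα hτG hτ0 hτi hφinfty hφadd hσ⟩⟩
end

section
/- Let D be a division ring. Suppose that either σ : D → D is a ring anti-automorphism with σ ∘ σ = id and ε ∈ D is an arbitrary element with ε ≠ 0 and σ(ε) = ε, or σ : D → D is a ring automorphism and ε ∈ D satisfies ε ≠ 0, σ(ε) = ε and σ(σ(x)) = ε⁻¹·x·ε for all x ∈ D. Then the map φ : D → D, φ(x) = ε·σ(x), is a bijective additive map satisfying φ(a⁻¹) = (φ⁻¹(a))⁻¹ for all a ∈ D with a ≠ 0. -/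
/-! Both an automorphism and an anti-automorphism fixing `1` commute with inversion, and in
either case `σ (ε * σ x) = x * ε`. Hence if `ε * σ b = a`, then `σ a = b * ε`, and
`ε * σ a⁻¹ = ε * (b * ε)⁻¹ = b⁻¹`. -/

theorem map_inv₀_of_map_mul {G₀ H₀ : Type*} [GroupWithZero G₀] [DivisionMonoid H₀]
    {σ : G₀ → H₀} (hmul : ∀ x y, σ (x * y) = σ x * σ y) (hone : σ 1 = 1)
    {a : G₀} (ha : a ≠ 0) : σ a⁻¹ = (σ a)⁻¹ :=
  eq_inv_of_mul_eq_one_left (by rw [← hmul, inv_mul_cancel₀ ha, hone])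

theorem map_inv₀_of_map_mul_rev {G₀ H₀ : Type*} [GroupWithZero G₀] [DivisionMonoid H₀]
    {σ : G₀ → H₀} (hmul : ∀ x y, σ (x * y) = σ y * σ x) (hone : σ 1 = 1)
    {a : G₀} (ha : a ≠ 0) : σ a⁻¹ = (σ a)⁻¹ :=
  eq_inv_of_mul_eq_one_left (by rw [← hmul, mul_inv_cancel₀ ha, hone])

/-- If `σ` is an anti-automorphism of a division ring `D`
with `σ ∘ σ = id` and `ε ≠ 0`, `σ(ε) = ε`, or `σ` is an automorphism with
`ε ≠ 0`, `σ(ε) = ε` and `σ²(x) = ε⁻¹·x·ε`, then `φ(x) = ε·σ(x)` is a bijective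
additive map satisfying `φ(a⁻¹) = (φ⁻¹(a))⁻¹` for all `a ≠ 0`, i.e. a flip
automorphism of the Moufang set `M(D)`. -/
theorem division_ring_flip_of_aut {D : Type*} [DivisionRing D]
    (σ : D → D) (hbij : Function.Bijective σ)
    (hadd : ∀ x y : D, σ (x + y) = σ x + σ y) (hone : σ 1 = 1)
    (ε : D) (hε : ε ≠ 0) (hfix : σ ε = ε)
    (hcase : ((∀ x y : D, σ (x * y) = σ y * σ x) ∧ ∀ x : D, σ (σ x) = x) ∨
             ((∀ x y : D, σ (x * y) = σ x * σ y) ∧ ∀ x : D, σ (σ x) = ε⁻¹ * x * ε)) :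
    Function.Bijective (fun x : D => ε * σ x) ∧
    (∀ x y : D, ε * σ (x + y) = ε * σ x + ε * σ y) ∧
    (∀ a b : D, a ≠ 0 → ε * σ b = a → ε * σ a⁻¹ = b⁻¹) := by
  obtain ⟨hinv, hσφ⟩ : (∀ a : D, a ≠ 0 → σ a⁻¹ = (σ a)⁻¹) ∧ ∀ x, σ (ε * σ x) = x * ε := by
    rcases hcase with ⟨hmul, hinvol⟩ | ⟨hmul, hconj⟩
    · exact ⟨fun a ↦ map_inv₀_of_map_mul_rev hmul hone, fun x ↦ by rw [hmul, hinvol, hfix]⟩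
    · refine ⟨fun a ↦ map_inv₀_of_map_mul hmul hone, fun x ↦ ?_⟩
      rw [hmul, hfix, hconj, mul_assoc, mul_inv_cancel_left₀ hε]
  refine ⟨(Equiv.mulLeft₀ ε hε).bijective.comp hbij, fun x y ↦ by rw [hadd, mul_add],
    fun a b ha hab ↦ ?_⟩
  rw [hinv a ha, ← hab, hσφ, mul_inv_rev, mul_inv_cancel_left₀ hε]
end

section
/- Let D be a division ring. The following are equivalent: (a) for all a, b ∈ D with a ≠ 0 and b ≠ 0, the element a² + a·b·a⁻¹·b is nonzero and there exist z ∈ D, z ≠ 0, and ε ∈ {1, -1}, with (a² + a·b·a⁻¹·b)·(ε·z²)⁻¹ ∈ [Dˣ, Dˣ]; (b) for all a ∈ D with a ≠ 0, the element 1 + a² is nonzero and there exist z ∈ D, z ≠ 0, and ε ∈ {1, -1}, with (1 + a²)·(ε·z²)⁻¹ ∈ [Dˣ, Dˣ]. -/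
private lemma mem_comm_iff_aux {G : Type*} [Group G] (x : G) :
    x ∈ commutator G ↔ Abelianization.of x = 1 :=
  (QuotientGroup.eq_one_iff x).symm

/-- In a division ring `D`, the condition
`a² + a·b·a⁻¹·b ∈ {±1}·(Dˣ)²·[Dˣ,Dˣ]` for all `a, b ∈ Dˣ` is equivalent to
`1 + a² ∈ {±1}·(Dˣ)²·[Dˣ,Dˣ]` for all `a ∈ Dˣ`. -/
theorem division_ring_projective_square_class_criterion {D : Type*} [DivisionRing D] :
    (∀ a b : D, a ≠ 0 → b ≠ 0 →
      (a ^ 2 + a * b * a⁻¹ * b ≠ 0 ∧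
        ∃ z : D, z ≠ 0 ∧ ∃ ε : D, (ε = 1 ∨ ε = -1) ∧ ∃ u ∈ commutator Dˣ,
          (a ^ 2 + a * b * a⁻¹ * b) * (ε * z ^ 2)⁻¹ = (u : D))) ↔
    (∀ a : D, a ≠ 0 →
      (1 + a ^ 2 ≠ 0 ∧
        ∃ z : D, z ≠ 0 ∧ ∃ ε : D, (ε = 1 ∨ ε = -1) ∧ ∃ u ∈ commutator Dˣ,
          (1 + a ^ 2) * (ε * z ^ 2)⁻¹ = (u : D))) := by
  constructor
  · intro h a ha
    have := h 1 a one_ne_zero ha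
    simpa [sq] using this
  · intro h a b ha hb
    have hc : b * a⁻¹ ≠ 0 := mul_ne_zero hb (inv_ne_zero ha)
    obtain ⟨hne, z, hz, ε, hε, u, hu, heq⟩ := h (b * a⁻¹) hc
    have key : a ^ 2 + a * b * a⁻¹ * b = a * (1 + (b * a⁻¹) ^ 2) * a := by
      simp [sq, mul_add, add_mul, mul_assoc, inv_mul_cancel₀ ha]
    have hεne : ε ≠ 0 := by rcases hε with rfl | rfl <;> simp
    -- units
    set A : Dˣ := Units.mk0 a ha with hA
    set Z : Dˣ := Units.mk0 z hz with hZ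
    set E : Dˣ := Units.mk0 ε hεne with hE
    have hεz : ε * z ^ 2 = ((E * Z ^ 2 : Dˣ) : D) := by push_cast; rfl
    have h1 : (1 : D) + (b * a⁻¹) ^ 2 = ((u * (E * Z ^ 2) : Dˣ) : D) := by
      have hne2 : ((E * Z ^ 2 : Dˣ) : D) ≠ 0 := Units.ne_zero _
      rw [hεz] at heq
      rw [Units.val_mul, ← heq, inv_mul_cancel_right₀ hne2]
    have htarget : a ^ 2 + a * b * a⁻¹ * b = ((A * (u * (E * Z ^ 2)) * A : Dˣ) : D) := by
      rw [key, h1]; push_cast; rfl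
    refine ⟨by rw [htarget]; exact Units.ne_zero _, a * z, mul_ne_zero ha hz, ε, hε, ?_⟩
    set W : Dˣ := A * (u * (E * Z ^ 2)) * A with hW
    set Z' : Dˣ := A * Z with hZ'
    refine ⟨W * (E * Z' ^ 2)⁻¹, ?_, ?_⟩
    · rw [mem_comm_iff_aux]
      have hu1 : Abelianization.of u = 1 := (mem_comm_iff_aux u).mp hu
      simp only [hW, hZ', map_mul, map_inv, map_pow, hu1]
      have : ∀ (x y e : Abelianization Dˣ),
          x * (1 * (e * y ^ 2)) * x * (e * (x * y) ^ 2)⁻¹ = 1 := by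
        intro x y e
        rw [one_mul, mul_pow, mul_inv_eq_one]
        simp only [pow_two]
        ac_rfl
      exact this _ _ _
    · have hz' : a * z = ((Z' : Dˣ) : D) := by rw [hZ']; push_cast; rfl
      rw [htarget, hz']
      rw [show ε = (E : D) by rw [hE, Units.val_mk0]]
      simp [Units.val_inv_eq_inv_val]
end
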